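/- Let r ≥ 3 be an integer, let G be the r×(r+5) cylindrical grid, let C_1 = D_1 and C_2 = D_{r+5} be its cuffs, and let φ be a proper 3-coloring of C_1 ∪ C_2 with colors {1,2,3} such that the winding number of φ on C_1 has absolute value at most 1 and the winding numbers of φ on C_1 and on C_2 (both computed with respect to the cyclic order of increasing first coordinate) are equal. Then there exists a proper 3-coloring ψ of G with ψ(v) = φ(v) for every vertex v of C_1 ∪ C_2. -/

import Mathlib

/-- The `r × s` cylindrical grid, with vertex set `ZMod r × Fin s` (the vertex
`(i, j)` of the paper, `1 ≤ j ≤ s`, is represented by `(i, j - 1)`). -/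
def cylGrid (r s : ℕ) : SimpleGraph (ZMod r × Fin s) where
  Adj u v := u ≠ v ∧
    ((u.2 = v.2 ∧ (v.1 = u.1 + 1 ∨ u.1 = v.1 + 1)) ∨
      (u.1 = v.1 ∧ (u.2.val + 1 = v.2.val ∨ v.2.val + 1 = u.2.val)))
  symm := by
    constructor
    rintro u v ⟨hne, h⟩
    refine ⟨hne.symm, ?_⟩
    rcases h with ⟨h1, h2⟩ | ⟨h1, h2⟩
    · exact Or.inl ⟨h1.symm, h2.symm⟩
    · exact Or.inr ⟨h1.symm, h2.symm⟩
  loopless := by constructor; rintro u ⟨hne, -⟩; exact hne rfl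

/-- The winding number of a 3-coloring `φ` of a cycle whose vertices are
`v_1, …, v_k` in cyclic order (vertex `v_{i+1}` is represented by `i : ZMod k`).
Colors lie in `ZMod 3`, where `1` and `2` are the colors 1 and 2 and `0`
represents the color 3. -/
def winding (k : ℕ) (φ : ZMod k → ZMod 3) : ℤ :=
  ∑ i ∈ Finset.range k,
    ((if φ (i : ZMod k) = 1 ∧ φ ((i : ZMod k) + 1) = 2 then 1 else 0)
      - (if φ (i : ZMod k) = 2 ∧ φ ((i : ZMod k) + 1) = 1 then 1 else 0))

/-! ### Auxiliary material: integer lifts of proper 3-colorings of a cycle -/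

/-- The integer lift of a 3-coloring of `ZMod r`, read along `ℕ`: a lattice
path with `±1` steps whose value reduces to the coloring mod `3`. -/
def lift' (r : ℕ) (φ : ZMod r → ZMod 3) : ℕ → ℤ
  | 0 => ((φ 0).val : ℤ)
  | n+1 => lift' r φ n + (if φ ((n+1 : ℕ) : ZMod r) = φ (n : ZMod r) + 1 then 1 else -1)

lemma lift'_succ (r : ℕ) (φ : ZMod r → ZMod 3) (n : ℕ) :
    lift' r φ (n+1)
      = lift' r φ n + (if φ ((n+1 : ℕ) : ZMod r) = φ (n : ZMod r) + 1 then 1 else -1) := rfl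

lemma lift'_step (r : ℕ) (φ : ZMod r → ZMod 3) (n : ℕ) :
    lift' r φ (n+1) = lift' r φ n + 1 ∨ lift' r φ (n+1) = lift' r φ n - 1 := by
  rw [lift'_succ]; split <;> [left; right] <;> ring

lemma zmod3_cases (x y : ZMod 3) (h : x ≠ y) : y = x + 1 ∨ y = x + 2 := by
  revert h; revert x y; decide

lemma cast_lift' (r : ℕ) (φ : ZMod r → ZMod 3) (hφ : ∀ i : ZMod r, φ i ≠ φ (i + 1)) (n : ℕ) :
    ((lift' r φ n : ℤ) : ZMod 3) = φ (n : ZMod r) := by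
  induction n with
  | zero => simp [lift']
  | succ n ih =>
      have hne : φ (n : ZMod r) ≠ φ ((n : ZMod r) + 1) := hφ _
      have hcast : ((n+1 : ℕ) : ZMod r) = (n : ZMod r) + 1 := by push_cast; ring
      rw [lift'_succ, hcast]
      rcases zmod3_cases _ _ hne with h | h
      · rw [if_pos h, h]; push_cast [ih]; ring
      · rw [if_neg (fun hh => by
            rw [h] at hh; exact (by decide : (2:ZMod 3) ≠ 1) (add_left_cancel hh)), h]
        push_cast [ih]; rw [show (-1 : ZMod 3) = 2 from by decide]

lemma lift'_add_r (r : ℕ) (φ : ZMod r → ZMod 3) (n : ℕ) :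
    lift' r φ (n + r) = lift' r φ n + (lift' r φ r - lift' r φ 0) := by
  induction n with
  | zero => simp [Nat.zero_add]
  | succ n ih =>
      have h1 : n + 1 + r = (n + r) + 1 := by omega
      rw [h1, lift'_succ, lift'_succ, ih]
      have c1 : ((n + r + 1 : ℕ) : ZMod r) = ((n+1 : ℕ) : ZMod r) := by
        push_cast [ZMod.natCast_self]; ring
      have c2 : ((n + r : ℕ) : ZMod r) = ((n : ℕ) : ZMod r) := by
        push_cast [ZMod.natCast_self]; ring
      rw [c1, c2]; ring

lemma sum_range_zmod (r : ℕ) [NeZero r] (g : ZMod r → ℤ) :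
    ∑ n ∈ Finset.range r, g (n : ZMod r) = ∑ x : ZMod r, g x := by
  refine Finset.sum_nbij' (fun n => (n : ZMod r)) (fun x => x.val) ?_ ?_ ?_ ?_ ?_
  · intro a _; exact Finset.mem_univ _
  · intro a _; exact Finset.mem_range.mpr (ZMod.val_lt a)
  · intro a ha; exact ZMod.val_cast_of_lt (Finset.mem_range.mp ha)
  · intro a _; exact ZMod.natCast_zmod_val a
  · intro a _; rfl

lemma sum_shift (r : ℕ) [NeZero r] (g : ZMod r → ℤ) :
    ∑ n ∈ Finset.range r, g ((n : ZMod r) + 1) = ∑ n ∈ Finset.range r, g (n : ZMod r) := by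
  rw [sum_range_zmod r (fun x => g (x + 1)), sum_range_zmod r g]
  exact Fintype.sum_equiv (Equiv.addRight 1) _ _ (fun x => rfl)

lemma step_eq (x y : ZMod 3) (h : x ≠ y) :
    (if y = x + 1 then (1:ℤ) else -1)
      = ((y.val : ℤ) - (x.val : ℤ))
        + 3 * ((if x = 2 ∧ y = 0 then 1 else 0) - (if x = 0 ∧ y = 2 then 1 else 0)) := by
  revert h; revert x y; decide

lemma ind_eq1 (x y : ZMod 3) (h : x ≠ y) :
    (if x = 1 ∧ y = 2 then (1:ℤ) else 0) + (if x = 0 ∧ y = 2 then 1 else 0)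
      = (if y = 2 then 1 else 0) := by
  revert h; revert x y; decide

lemma ind_eq2 (x y : ZMod 3) (h : x ≠ y) :
    (if x = 2 ∧ y = 1 then (1:ℤ) else 0) + (if x = 2 ∧ y = 0 then 1 else 0)
      = (if x = 2 then 1 else 0) := by
  revert h; revert x y; decide

/-- The total increase of the lift over one full period is three times the
winding number. -/
lemma lift'_winding (r : ℕ) [NeZero r] (φ : ZMod r → ZMod 3)
    (hφ : ∀ i : ZMod r, φ i ≠ φ (i + 1)) :
    lift' r φ r - lift' r φ 0 = 3 * winding r φ := by
  have hc : ∀ n : ℕ, ((n+1 : ℕ) : ZMod r) = (n : ZMod r) + 1 := by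
    intro n; push_cast; ring
  have tele : ∑ n ∈ Finset.range r, (lift' r φ (n+1) - lift' r φ n)
      = lift' r φ r - lift' r φ 0 := Finset.sum_range_sub (lift' r φ) r
  rw [← tele]
  have h1 : ∀ n ∈ Finset.range r, lift' r φ (n+1) - lift' r φ n
      = (((φ ((n : ZMod r) + 1)).val : ℤ) - ((φ (n : ZMod r)).val : ℤ))
        + 3 * ((if φ (n : ZMod r) = 2 ∧ φ ((n : ZMod r) + 1) = 0 then 1 else 0)
            - (if φ (n : ZMod r) = 0 ∧ φ ((n : ZMod r) + 1) = 2 then 1 else 0)) := by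
    intro n _
    rw [lift'_succ, hc n, add_sub_cancel_left]
    exact step_eq _ _ (hφ _)
  rw [Finset.sum_congr rfl h1, Finset.sum_add_distrib]
  have h2 : ∑ n ∈ Finset.range r,
      (((φ ((n : ZMod r) + 1)).val : ℤ) - ((φ (n : ZMod r)).val : ℤ)) = 0 := by
    rw [Finset.sum_sub_distrib, sum_shift r (fun x => ((φ x).val : ℤ)), sub_self]
  rw [h2, zero_add, ← Finset.mul_sum]
  congr 1
  have e1 : ∑ n ∈ Finset.range r,
        ((if φ (n : ZMod r) = 2 ∧ φ ((n : ZMod r) + 1) = 0 then (1:ℤ) else 0)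
          - (if φ (n : ZMod r) = 0 ∧ φ ((n : ZMod r) + 1) = 2 then 1 else 0))
      - winding r φ = 0 := by
    unfold winding
    rw [← Finset.sum_sub_distrib]
    have h3 : ∀ n ∈ Finset.range r,
        ((if φ (n : ZMod r) = 2 ∧ φ ((n : ZMod r) + 1) = 0 then (1:ℤ) else 0)
          - (if φ (n : ZMod r) = 0 ∧ φ ((n : ZMod r) + 1) = 2 then 1 else 0))
        - ((if φ (n : ZMod r) = 1 ∧ φ ((n : ZMod r) + 1) = 2 then 1 else 0)
          - (if φ (n : ZMod r) = 2 ∧ φ ((n : ZMod r) + 1) = 1 then 1 else 0))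
        = (if φ (n : ZMod r) = 2 then 1 else 0)
          - (if φ ((n : ZMod r) + 1) = 2 then 1 else 0) := by
      intro n _
      have a1 := ind_eq1 (φ (n : ZMod r)) (φ ((n : ZMod r) + 1)) (hφ _)
      have a2 := ind_eq2 (φ (n : ZMod r)) (φ ((n : ZMod r) + 1)) (hφ _)
      linarith
    rw [Finset.sum_congr rfl h3, Finset.sum_sub_distrib,
      sum_shift r (fun x => (if φ x = 2 then (1:ℤ) else 0)), sub_self]
  linarith

lemma cast_ne_of_not_dvd (x y : ℤ) (h : ¬ (3:ℤ) ∣ (y - x)) : ((x : ZMod 3) ≠ (y : ZMod 3)) := by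
  intro hh
  apply h
  have h2 : ((y - x : ℤ) : ZMod 3) = 0 := by push_cast; rw [hh]; ring
  exact_mod_cast (ZMod.intCast_zmod_eq_zero_iff_dvd (y - x) 3).mp h2

/-- The main construction: given integer lifts of the two cuff colorings with
the same periodic increment `c` (divisible by `3`), interpolate between them
using pointwise minima of shifted lifts. -/
lemma exten_aux (r : ℕ) (hr : 3 ≤ r) (φ₁ φ₂ : ZMod r → ZMod 3)
    (F₁ F₂ : ℕ → ℤ) (c : ℤ) (hc3 : (3:ℤ) ∣ c)
    (h₁step : ∀ n, F₁ (n+1) = F₁ n + 1 ∨ F₁ (n+1) = F₁ n - 1)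
    (h₂step : ∀ n, F₂ (n+1) = F₂ n + 1 ∨ F₂ (n+1) = F₂ n - 1)
    (h₁cast : ∀ n : ℕ, ((F₁ n : ℤ) : ZMod 3) = φ₁ (n : ZMod r))
    (h₂cast : ∀ n : ℕ, ((F₂ n : ℤ) : ZMod 3) = φ₂ (n : ZMod r))
    (h₁per : ∀ n, F₁ (n + r) = F₁ n + c)
    (h₂per : ∀ n, F₂ (n + r) = F₂ n + c) :
    ∃ ψ : ZMod r × Fin (r + 5) → ZMod 3,
      (∀ u v : ZMod r × Fin (r + 5), (cylGrid r (r + 5)).Adj u v → ψ u ≠ ψ v) ∧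
      (∀ i : ZMod r, ψ (i, ⟨0, by omega⟩) = φ₁ i) ∧
      (∀ i : ZMod r, ψ (i, ⟨r + 4, by omega⟩) = φ₂ i) := by
  haveI : NeZero r := ⟨by omega⟩
  haveI : Fact (1 < r) := ⟨by omega⟩
  have dpar : ∀ n, (2:ℤ) ∣ (F₂ n - F₁ n - (F₂ 0 - F₁ 0)) := by
    intro n
    induction n with
    | zero => omega
    | succ n ih =>
        have h1 := h₁step n
        have h2 := h₂step n
        omega
  have dlip : ∀ m k, F₂ (m + k) - F₁ (m + k) - (F₂ m - F₁ m) ≤ 2 * k ∧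
      (F₂ m - F₁ m) - (F₂ (m + k) - F₁ (m + k)) ≤ 2 * k := by
    intro m k
    induction k with
    | zero => simp
    | succ k ih =>
        have h1 := h₁step (m + k)
        have h2 := h₂step (m + k)
        have e : m + (k+1) = (m + k) + 1 := by omega
        rw [e]
        push_cast
        push_cast at ih
        omega
  have dk : ∀ k m, F₂ (m + k * r) - F₁ (m + k * r) = F₂ m - F₁ m := by
    intro k
    induction k with
    | zero => simp
    | succ k ih =>
        intro m
        have e : m + (k+1) * r = (m + k * r) + r := by ring
        rw [e, h₁per, h₂per]
        have := ih m
        omega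
  have dbound : ∀ n, F₂ n - F₁ n - (F₂ 0 - F₁ 0) ≤ r ∧
      (F₂ 0 - F₁ 0) - (F₂ n - F₁ n) ≤ r := by
    intro n
    have hmod : F₂ n - F₁ n = F₂ (n % r) - F₁ (n % r) := by
      conv_lhs => rw [← Nat.mod_add_div n r]
      rw [show n % r + r * (n / r) = n % r + (n / r) * r by ring, dk]
    have hm : n % r < r := Nat.mod_lt _ (by omega)
    have h1 := dlip 0 (n % r)
    have h2 := dlip (n % r) (r - n % r)
    have hdr : F₂ (n % r + (r - n % r)) - F₁ (n % r + (r - n % r)) = F₂ 0 - F₁ 0 := by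
      rw [show n % r + (r - n % r) = 0 + 1 * r by omega, dk]
    rw [hdr] at h2
    simp only [Nat.zero_add] at h1
    rw [hmod]
    have hc : ((n % r : ℕ) : ℤ) < r := by exact_mod_cast hm
    have hc2 : ((r - n % r : ℕ) : ℤ) = (r : ℤ) - (n % r : ℕ) := by
      push_cast [Nat.cast_sub hm.le]; ring
    omega
  set T : ℤ := (r : ℤ) + 4 with hT
  set d0 : ℤ := F₂ 0 - F₁ 0 with hd0
  set e : ℤ := (4 * d0 - 3 * T) % 6 with he
  set K : ℤ := 3 * T - d0 + e with hK
  have hqe : 6 * ((4 * d0 - 3 * T) / 6) + e = 4 * d0 - 3 * T := by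
    rw [he]; exact Int.mul_ediv_add_emod _ 6
  have he0 : 0 ≤ e := Int.emod_nonneg _ (by norm_num)
  have he6 : e < 6 := Int.emod_lt_of_pos _ (by norm_num)
  have hK3 : (3:ℤ) ∣ K := by omega
  have Eb : ∀ n, 2 * T ≤ F₂ n - F₁ n + K ∧ F₂ n - F₁ n + K ≤ 4 * T ∧
      (2:ℤ) ∣ (F₂ n - F₁ n + K) := by
    intro n
    have h1 := dbound n
    have h2 := dpar n
    omega
  refine ⟨fun p => ((min (F₁ p.1.val + 4 * (p.2.val : ℤ))
      (F₂ p.1.val + K - 2 * (T - (p.2.val : ℤ))) : ℤ) : ZMod 3), ?_, ?_, ?_⟩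
  · have claimV : ∀ (i : ZMod r) (j j' : Fin (r+5)), j.val + 1 = j'.val →
        ((min (F₁ i.val + 4 * (j.val : ℤ)) (F₂ i.val + K - 2 * (T - (j.val : ℤ))) : ℤ) : ZMod 3)
        ≠ ((min (F₁ i.val + 4 * (j'.val : ℤ))
            (F₂ i.val + K - 2 * (T - (j'.val : ℤ))) : ℤ) : ZMod 3) := by
      intro i j j' hj
      apply cast_ne_of_not_dvd
      have hj' : (j'.val : ℤ) = (j.val : ℤ) + 1 := by exact_mod_cast hj.symm
      have hE := Eb i.val
      rw [hj']
      rintro ⟨m, hm⟩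
      omega
    have claimH : ∀ (i : ZMod r) (j : Fin (r+5)),
        ((min (F₁ i.val + 4 * (j.val : ℤ)) (F₂ i.val + K - 2 * (T - (j.val : ℤ))) : ℤ) : ZMod 3)
        ≠ ((min (F₁ (i+1).val + 4 * (j.val : ℤ))
            (F₂ (i+1).val + K - 2 * (T - (j.val : ℤ))) : ℤ) : ZMod 3) := by
      intro i j
      have hval : (i + 1).val = (i.val + 1) % r := by
        rw [ZMod.val_add, ZMod.val_one]
      have hlt : i.val < r := ZMod.val_lt i
      rcases Nat.lt_or_ge (i.val + 1) r with h | h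
      · rw [hval, Nat.mod_eq_of_lt h]
        apply cast_ne_of_not_dvd
        have h1 := h₁step i.val
        have h2 := h₂step i.val
        have hE := Eb i.val
        have hE' := Eb (i.val + 1)
        rintro ⟨m, hm⟩
        omega
      · have hiv : i.val + 1 = r := by omega
        have hz : (i + 1).val = 0 := by rw [hval, hiv, Nat.mod_self]
        rw [hz]
        apply cast_ne_of_not_dvd
        have h1 := h₁step i.val
        have h2 := h₂step i.val
        have hp1 : F₁ (i.val + 1) = F₁ 0 + c := by
          rw [hiv, show r = 0 + r by omega, h₁per]
        have hp2 : F₂ (i.val + 1) = F₂ 0 + c := by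
          rw [hiv, show r = 0 + r by omega, h₂per]
        have hE := Eb i.val
        have hE' := Eb 0
        obtain ⟨w, hw⟩ := hc3
        rintro ⟨m, hm⟩
        omega
    rintro ⟨a, b⟩ ⟨a', b'⟩ ⟨hne, h⟩
    rcases h with ⟨h1, h2⟩ | ⟨h1, h2⟩
    · simp only at h1
      subst h1
      rcases h2 with h2 | h2
      · subst h2
        exact claimH a b
      · subst h2
        exact (claimH a' b).symm
    · simp only at h1
      subst h1
      rcases h2 with h2 | h2
      · exact claimV a b b' h2
      · exact (claimV a b' b h2).symm
  · intro i
    have hE := Eb i.val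
    simp only [Nat.cast_zero]
    have hmin : min (F₁ i.val + 4 * (0:ℤ)) (F₂ i.val + K - 2 * (T - 0)) = F₁ i.val := by
      omega
    rw [hmin, h₁cast, ZMod.natCast_zmod_val]
  · intro i
    have hE := Eb i.val
    have hcast : (((r:ℕ) + 4 : ℕ) : ℤ) = T := by rw [hT]; push_cast; ring
    simp only
    rw [hcast]
    have hmin : min (F₁ i.val + 4 * T) (F₂ i.val + K - 2 * (T - T)) = F₂ i.val + K := by
      omega
    rw [hmin]
    push_cast
    rw [h₂cast, ZMod.natCast_zmod_val]
    obtain ⟨w, hw⟩ := hK3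
    rw [hw]
    push_cast
    simp [show ((3 : ZMod 3)) = 0 from by decide]

/-- Lemma `lem:exten`: let `G` be the `r × (r+5)` cylindrical grid with cuffs
`C₁ = D₁` and `C₂ = D_{r+5}`, and let `φ` be a proper 3-coloring of `C₁ ∪ C₂`
(given by its restrictions `φ₁` and `φ₂` to the two cuffs) such that
`|w_φ(C₁)| ≤ 1` and the winding numbers on the two cuffs (both computed with
respect to the cyclic order of increasing first coordinate) are equal.  Then `φ`
extends to a proper 3-coloring `ψ` of `G`. -/
theorem stmt_6 (r : ℕ) (hr : 3 ≤ r)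
    (φ₁ φ₂ : ZMod r → ZMod 3)
    (hφ₁ : ∀ i : ZMod r, φ₁ i ≠ φ₁ (i + 1))
    (hφ₂ : ∀ i : ZMod r, φ₂ i ≠ φ₂ (i + 1))
    (hw1 : |winding r φ₁| ≤ 1)
    (hw : winding r φ₁ = winding r φ₂) :
    ∃ ψ : ZMod r × Fin (r + 5) → ZMod 3,
      (∀ u v : ZMod r × Fin (r + 5), (cylGrid r (r + 5)).Adj u v → ψ u ≠ ψ v) ∧
      (∀ i : ZMod r, ψ (i, ⟨0, by omega⟩) = φ₁ i) ∧
      (∀ i : ZMod r, ψ (i, ⟨r + 4, by omega⟩) = φ₂ i) := by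
  haveI : NeZero r := ⟨by omega⟩
  have c1 := lift'_winding r φ₁ hφ₁
  have c2 := lift'_winding r φ₂ hφ₂
  have hceq : lift' r φ₂ r - lift' r φ₂ 0 = lift' r φ₁ r - lift' r φ₁ 0 := by
    rw [c1, c2, hw]
  refine exten_aux r hr φ₁ φ₂ (lift' r φ₁) (lift' r φ₂)
    (lift' r φ₁ r - lift' r φ₁ 0) ⟨winding r φ₁, c1⟩
    (lift'_step r φ₁) (lift'_step r φ₂)
    (cast_lift' r φ₁ hφ₁) (cast_lift' r φ₂ hφ₂)
    (lift'_add_r r φ₁) ?_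
  intro n
  rw [lift'_add_r r φ₂ n, hceq]
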